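/- Let E be a real inner product space, let b ∈ E be a fixed vector, and for y ∈ E, y ≠ 0, set α(y) = ‖y‖, β(y) = ⟪b, y⟫ and s(y) = β(y)/α(y). Let Q : ℝ → ℝ be twice differentiable. Then for every y ≠ 0, the composite function y ↦ Q(s(y)) is twice Fréchet differentiable at y, its first derivative at y in the direction b equals (‖b‖² - s(y)²)·Q'(s(y))/‖y‖, and its second derivative at y evaluated at (b, b) equals (‖b‖² - s(y)²)·[ (‖b‖² - s(y)²)·Q''(s(y)) - 3·s(y)·Q'(s(y)) ]/‖y‖². -/

import Mathlib

/-!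
Write `s = ⟪b, ·⟫ / ‖·‖`. Away from `0` the derivative of `s` in the direction `b` is
`(‖b‖² - s²) / ‖y‖` and that of `‖·‖` is `s`. Hence `Θ₁ = q(s) / ‖y‖` with
`q t = (‖b‖² - t²) Q'(t)`, and differentiating this quotient once more in the direction `b` gives
`((‖b‖² - s²) q'(s) - s q(s)) / ‖y‖²`, which expands to the formula for `Θ₂`. Existence of the
second derivative follows from `D(Q ∘ s) = Q'(s) • Ds`, with `s` smooth away from `0`.
-/

open scoped RealInnerProductSpace Topology

theorem fderiv_fderiv_apply_of_eventuallyEq {𝕜 E F : Type*} [NontriviallyNormedField 𝕜]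
    [NormedAddCommGroup E] [NormedSpace 𝕜 E] [NormedAddCommGroup F] [NormedSpace 𝕜 F]
    {f g : E → F} {y : E} (v w : E) (hf : DifferentiableAt 𝕜 (fderiv 𝕜 f) y)
    (hg : (fun z => fderiv 𝕜 f z v) =ᶠ[𝓝 y] g) :
    fderiv 𝕜 (fderiv 𝕜 f) y w v = fderiv 𝕜 g y w := by
  rw [← hg.fderiv_eq, fderiv_clm_apply hf (differentiableAt_const v)]
  simp

section

variable {E : Type*} [NormedAddCommGroup E] [InnerProductSpace ℝ E]

theorem hasFDerivAt_norm_of_ne_zero {x : E} (hx : x ≠ 0) :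
    HasFDerivAt (‖·‖) (‖x‖⁻¹ • innerSL ℝ x) x := by
  have h := (hasStrictFDerivAt_norm_sq x).hasFDerivAt.sqrt (by positivity)
  simp only [Real.sqrt_sq (norm_nonneg _)] at h
  refine h.congr_fderiv ?_
  ext v
  simp [field]

theorem hasFDerivAt_inv_norm {x : E} (hx : x ≠ 0) :
    HasFDerivAt (fun z : E => ‖z‖⁻¹) (-(‖x‖ ^ 3)⁻¹ • innerSL ℝ x) x := by
  have h : HasFDerivAt (fun z : E => ‖z‖⁻¹) _ x :=
    (hasDerivAt_inv (norm_ne_zero_iff.2 hx)).comp_hasFDerivAt x (hasFDerivAt_norm_of_ne_zero hx)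
  refine h.congr_fderiv ?_
  ext v
  simp [field]

variable (b : E) {x : E}

theorem hasFDerivAt_inner_div_norm (hx : x ≠ 0) :
    HasFDerivAt (fun z => ⟪b, z⟫ / ‖z‖)
      (‖x‖⁻¹ • innerSL ℝ b - (⟪b, x⟫ / ‖x‖ ^ 3) • innerSL ℝ x) x := by
  have h : HasFDerivAt (fun z => ⟪b, z⟫ * ‖z‖⁻¹) _ x :=
    (innerSL ℝ b).hasFDerivAt.mul (hasFDerivAt_inv_norm hx)
  simp only [div_eq_mul_inv]
  refine h.congr_fderiv ?_
  ext v
  simp [field]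
  ring

theorem contDiffAt_inner_div_norm (n : WithTop ℕ∞) (hx : x ≠ 0) :
    ContDiffAt ℝ n (fun z => ⟪b, z⟫ / ‖z‖) x :=
  (contDiffAt_const.inner ℝ contDiffAt_id).div (contDiffAt_norm ℝ hx) (norm_ne_zero_iff.2 hx)

theorem fderiv_comp_inner_div_norm_apply {q : ℝ → ℝ} (hx : x ≠ 0)
    (hq : DifferentiableAt ℝ q (⟪b, x⟫ / ‖x‖)) :
    fderiv ℝ (fun z => q (⟪b, z⟫ / ‖z‖)) x b
      = (‖b‖ ^ 2 - (⟪b, x⟫ / ‖x‖) ^ 2) * deriv q (⟪b, x⟫ / ‖x‖) / ‖x‖ := by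
  have h : HasFDerivAt (fun z => q (⟪b, z⟫ / ‖z‖)) _ x :=
    hq.hasDerivAt.comp_hasFDerivAt x (hasFDerivAt_inner_div_norm b hx)
  rw [h.fderiv]
  simp [real_inner_comm x b, field]

theorem fderiv_comp_inner_div_norm_div_norm_apply {q : ℝ → ℝ} (hx : x ≠ 0)
    (hq : DifferentiableAt ℝ q (⟪b, x⟫ / ‖x‖)) :
    fderiv ℝ (fun z => q (⟪b, z⟫ / ‖z‖) / ‖z‖) x b
      = ((‖b‖ ^ 2 - (⟪b, x⟫ / ‖x‖) ^ 2) * deriv q (⟪b, x⟫ / ‖x‖)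
          - ⟪b, x⟫ / ‖x‖ * q (⟪b, x⟫ / ‖x‖)) / ‖x‖ ^ 2 := by
  have h : HasFDerivAt (fun z => q (⟪b, z⟫ / ‖z‖) * ‖z‖⁻¹) _ x :=
    (hq.hasDerivAt.comp_hasFDerivAt x (hasFDerivAt_inner_div_norm b hx)).mul
      (hasFDerivAt_inv_norm hx)
  simp only [div_eq_mul_inv (q _)]
  rw [h.fderiv]
  simp [real_inner_comm x b, field]
  ring

theorem differentiableAt_fderiv_comp_inner_div_norm {Q : ℝ → ℝ} (hx : x ≠ 0)
    (hQ : Differentiable ℝ Q) (hQ' : DifferentiableAt ℝ (deriv Q) (⟪b, x⟫ / ‖x‖)) :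
    DifferentiableAt ℝ (fderiv ℝ (fun z => Q (⟪b, z⟫ / ‖z‖))) x := by
  have hs : ∀ z, z ≠ 0 → DifferentiableAt ℝ (fun w => ⟪b, w⟫ / ‖w‖) z := fun z hz =>
    (contDiffAt_inner_div_norm b 1 hz).differentiableAt one_ne_zero
  have heq : (fun z => deriv Q (⟪b, z⟫ / ‖z‖) • fderiv ℝ (fun w => ⟪b, w⟫ / ‖w‖) z)
      =ᶠ[𝓝 x] fderiv ℝ (fun z => Q (⟪b, z⟫ / ‖z‖)) := by
    filter_upwards [isOpen_compl_singleton.mem_nhds hx] with z hz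
    exact ((hQ _).hasDerivAt.comp_hasFDerivAt z (hs z hz).hasFDerivAt).fderiv.symm
  refine DifferentiableAt.congr_of_eventuallyEq ?_ heq.symm
  have hDs := (contDiffAt_inner_div_norm b 2 hx).fderiv_right (m := 1) le_rfl
  exact (hQ'.comp x (hs x hx)).smul (hDs.differentiableAt one_ne_zero)

end

/-- for `s(y) = ⟪b, y⟫/‖y‖` and a twice differentiable `Q : ℝ → ℝ`,
the composite `y ↦ Q(s(y))` is twice Fréchet differentiable at every `y ≠ 0`, with
`Θ₁ = (‖b‖² - s²)·Q'(s)/‖y‖` and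
`Θ₂ = (‖b‖² - s²)·[(‖b‖² - s²)·Q''(s) - 3·s·Q'(s)]/‖y‖²`
(equations (3.a3x) and (3.005x) of the paper). -/
theorem stmt_9 {E : Type*} [NormedAddCommGroup E] [InnerProductSpace ℝ E]
    (b : E) (s : E → ℝ) (hs : s = fun y => ⟪b, y⟫ / ‖y‖)
    (Q : ℝ → ℝ) (hQ1 : Differentiable ℝ Q) (hQ2 : Differentiable ℝ (deriv Q)) :
    ∀ y : E, y ≠ 0 →
      DifferentiableAt ℝ (fun z => Q (s z)) y ∧
      DifferentiableAt ℝ (fderiv ℝ (fun z => Q (s z))) y ∧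
      fderiv ℝ (fun z => Q (s z)) y b
        = (‖b‖ ^ 2 - (s y) ^ 2) * deriv Q (s y) / ‖y‖ ∧
      fderiv ℝ (fderiv ℝ (fun z => Q (s z))) y b b
        = (‖b‖ ^ 2 - (s y) ^ 2) *
            ((‖b‖ ^ 2 - (s y) ^ 2) * deriv (deriv Q) (s y)
              - 3 * s y * deriv Q (s y)) / ‖y‖ ^ 2 := by
  subst hs
  intro y hy
  have hD2 := differentiableAt_fderiv_comp_inner_div_norm b hy hQ1 (hQ2 _)
  refine ⟨(hQ1 _).comp y ((contDiffAt_inner_div_norm b 1 hy).differentiableAt one_ne_zero),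
    hD2, fderiv_comp_inner_div_norm_apply b hy (hQ1 _), ?_⟩
  set q : ℝ → ℝ := fun t => (‖b‖ ^ 2 - t ^ 2) * deriv Q t
  have hq : ∀ t, HasDerivAt q (-2 * t * deriv Q t + (‖b‖ ^ 2 - t ^ 2) * deriv (deriv Q) t) t :=
    fun t => (((hasDerivAt_pow 2 t).const_sub _).mul (hQ2 t).hasDerivAt).congr_deriv (by ring)
  have hΘ₁ : (fun z => fderiv ℝ (fun w => Q (⟪b, w⟫ / ‖w‖)) z b)
      =ᶠ[𝓝 y] fun z => q (⟪b, z⟫ / ‖z‖) / ‖z‖ := by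
    filter_upwards [isOpen_compl_singleton.mem_nhds hy] with z hz
    exact fderiv_comp_inner_div_norm_apply b hz (hQ1 _)
  rw [fderiv_fderiv_apply_of_eventuallyEq b b hD2 hΘ₁,
    fderiv_comp_inner_div_norm_div_norm_apply b hy (hq _).differentiableAt, (hq _).deriv]
  ring
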